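/- Every infinite connected matroid contains an infinite circuit or an infinite cocircuit. -/

import Mathlib

open Set Matroid

variable {α : Type*}

/-- A circuit of a (possibly infinite) matroid: a minimal dependent set. -/
def Circuit (M : Matroid α) (C : Set α) : Prop :=
  M.Dep C ∧ ∀ C' ⊂ C, ¬ M.Dep C'

/-- A cocircuit: a circuit of the dual matroid. -/
def Cocircuit (M : Matroid α) (D : Set α) : Prop :=
  Circuit M✶ D

/-- Deletion of the set `D` from the matroid `M`. -/
def delete (M : Matroid α) (D : Set α) : Matroid α :=
  M ↾ (M.E \ D)

/-- Contraction of the set `C` in the matroid `M`, i.e. `M/C = (M✶ − C)✶`. -/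
def contract (M : Matroid α) (C : Set α) : Matroid α :=
  (_root_.delete M✶ C)✶

/-- `del M I J` : the minimum cardinality of a finite `F ⊆ I ∪ J` with
`(I ∪ J) \ F` independent in `M`, or `∞` if no such finite set exists. -/
noncomputable def del (M : Matroid α) (I J : Set α) : ℕ∞ :=
  sInf {n : ℕ∞ | ∃ F : Set α, F.Finite ∧ F ⊆ I ∪ J ∧ M.Indep ((I ∪ J) \ F) ∧ n = F.encard}

/-- The connectivity function `κ_M(X)`, defined via `del` on bases of `M|X`
and `M|(E \ X)` (its value does not depend on the choice of bases). -/
noncomputable def conn (M : Matroid α) (X : Set α) : ℕ∞ :=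
  ⨅ B ∈ {B | (M ↾ X).IsBase B}, ⨅ B' ∈ {B' | (M ↾ (M.E \ X)).IsBase B'}, del M B B'

/-- `κ_M(X,Y) = min {κ_M(U) : X ⊆ U ⊆ E(M) \ Y}`. -/
noncomputable def connBtw (M : Matroid α) (X Y : Set α) : ℕ∞ :=
  ⨅ U ∈ {U | X ⊆ U ∧ U ⊆ M.E \ Y}, conn M U

/-- `x ~ y` iff `x = y` or some circuit contains both `x` and `y`. -/
def ConnRel (M : Matroid α) (x y : α) : Prop :=
  x = y ∨ ∃ C, Circuit M C ∧ x ∈ C ∧ y ∈ C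

/-!
If every circuit is finite, connectivity and the infinitude of the ground set give infinitely
many circuits through a fixed element `e`. Let `L` be their limit along a free ultrafilter. Each
finite subset of `L` is a proper subset of one of these circuits, so `L` is independent (the
matroid is finitary) and some cocircuit `K` meets `L` exactly in `e`. Were `K` finite, some
circuit through `e` would agree with `L` on `K`, and so meet the cocircuit `K` only in `e`.
-/

lemma circuit_iff_isCircuit {M : Matroid α} {C : Set α} : Circuit M C ↔ M.IsCircuit C := by
  rw [isCircuit_def, minimal_iff_forall_ssubset]
  rfl

lemma cocircuit_iff_isCocircuit {M : Matroid α} {K : Set α} : Cocircuit M K ↔ M.IsCocircuit K :=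
  circuit_iff_isCircuit

lemma Set.Finite.eventually_inter_eq_setOf_eventually_mem {ι : Type*} (U : Ultrafilter ι)
    (s : ι → Set α) {F : Set α} (hF : F.Finite) :
    ∀ᶠ i in U, s i ∩ F = {a | ∀ᶠ j in U, a ∈ s j} ∩ F := by
  have hmem : ∀ a ∈ F, ∀ᶠ i in U, (a ∈ s i ↔ ∀ᶠ j in U, a ∈ s j) := by
    intro a _
    by_cases ha : ∀ᶠ j in U, a ∈ s j
    · exact ha.mono fun i hi => iff_of_true hi ha
    · exact (Ultrafilter.eventually_not.2 ha).mono fun i hi => iff_of_false hi ha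
  filter_upwards [(Filter.eventually_all_finite hF).2 hmem] with i hi
  ext a
  simp only [mem_inter_iff, mem_ofPred_eq]
  exact ⟨fun h => ⟨(hi a h.2).1 h.1, h.2⟩, fun h => ⟨(hi a h.2).2 h.1, h.2⟩⟩

namespace Matroid

variable {M : Matroid α}

lemma indep_setOf_eventually_mem_isCircuit [M.Finitary] {ι : Type*} {C : ι → Set α}
    (hC : ∀ i, M.IsCircuit (C i)) (hinj : C.Injective) (U : Ultrafilter ι)
    (hU : (U : Filter ι) ≤ Filter.cofinite) : M.Indep {e | ∀ᶠ i in U, e ∈ C i} := by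
  refine indep_of_forall_finite_subset_indep _ fun F hFL hF => ?_
  have hsub : ∀ᶠ i in U, F ⊆ C i := by
    filter_upwards [hF.eventually_inter_eq_setOf_eventually_mem U C] with i hi
    rw [← inter_eq_right.2 hFL, ← hi]
    exact inter_subset_left
  have hne : ∀ᶠ i in U, C i ≠ F :=
    hU (hinj.tendsto_cofinite.eventually (Filter.eventually_cofinite_ne F))
  obtain ⟨i, hFi, hiF⟩ := (hsub.and hne).exists
  exact (hC i).ssubset_indep (ssubset_of_subset_of_ne hFi hiF.symm)

lemma exists_infinite_isCocircuit_of_infinite_setOf_isCircuit_mem [M.Finitary] {e : α}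
    (h : {C | M.IsCircuit C ∧ e ∈ C}.Infinite) : ∃ K, M.IsCocircuit K ∧ K.Infinite := by
  have : Infinite {C | M.IsCircuit C ∧ e ∈ C} := h.to_subtype
  set U := Filter.hyperfilter {C | M.IsCircuit C ∧ e ∈ C}
  set L := {a | ∀ᶠ C in (U : Filter {C | M.IsCircuit C ∧ e ∈ C}), a ∈ C.1}
  have hL : M.Indep L := indep_setOf_eventually_mem_isCircuit (fun C => C.2.1)
    Subtype.val_injective U Filter.hyperfilter_le_cofinite
  have heL : e ∈ L := Filter.Eventually.of_forall fun C => C.2.2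
  obtain ⟨K, hK, hKL⟩ := hL.exists_isCocircuit_inter_eq_mem heL
  refine ⟨K, hK, fun hKfin => ?_⟩
  obtain ⟨C, hCK⟩ := (hKfin.eventually_inter_eq_setOf_eventually_mem U Subtype.val).exists
  refine C.2.1.inter_isCocircuit_ne_singleton hK (e := e) ?_
  rw [hCK, inter_comm, hKL]

lemma infinite_setOf_isCircuit_mem [M.Finitary] {x : α} (hinf : M.E.Infinite)
    (hconn : ∀ y ∈ M.E, ConnRel M x y) : {C | M.IsCircuit C ∧ x ∈ C}.Infinite := by
  refine fun hfin => hinf (((hfin.sUnion fun C hC => hC.1.finite).insert x).subset ?_)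
  intro y hy
  rcases hconn y hy with rfl | ⟨C, hC, hxC, hyC⟩
  · exact mem_insert _ _
  · exact mem_insert_of_mem _ ⟨C, ⟨circuit_iff_isCircuit.1 hC, hxC⟩, hyC⟩

end Matroid

theorem stmt7 (M : Matroid α) (hinf : M.E.Infinite)
    (hconn : ∀ x ∈ M.E, ∀ y ∈ M.E, ConnRel M x y) :
    (∃ C, Circuit M C ∧ C.Infinite) ∨ (∃ D, Cocircuit M D ∧ D.Infinite) := by
  simp only [circuit_iff_isCircuit, cocircuit_iff_isCocircuit]
  by_cases hfin : ∀ C, M.IsCircuit C → C.Finite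
  · have : M.Finitary := finitary_iff_forall_isCircuit_finite.2 hfin
    obtain ⟨x, hx⟩ := hinf.nonempty
    exact Or.inr (exists_infinite_isCocircuit_of_infinite_setOf_isCircuit_mem
      (infinite_setOf_isCircuit_mem hinf (hconn x hx)))
  · push Not at hfin
    exact Or.inl hfin
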